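/- Let X be a real Banach space, 0 < p < ∞, and ∑_i x_i a series in X. Then ∑_i x_i is weakly unconditionally Cauchy if and only if the linear map T : S_{w_p}(∑ x_i) → X, T((a_i)) = the strong p-Cesàro limit of the partial sums ∑_{i=1}^n a_i x_i, is continuous (bounded). -/

import Mathlib

open Filter Finset BoundedContinuousFunction

def StrongCesaro {X : Type*} [NormedAddCommGroup X] (p : ℝ) (x : ℕ → X) (L : X) : Prop :=
  Tendsto (fun n : ℕ => (n : ℝ)⁻¹ * ∑ k ∈ range n, ‖x k - L‖ ^ p) atTop (nhds 0)

/-!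
If `∑ xᵢ` is weakly unconditionally Cauchy, then for each `a ∈ ℓ∞` the partial sums
`∑_{i<n} aᵢ xᵢ` are weakly bounded, hence bounded, and a second application of the uniform
boundedness principle bounds the operators `a ↦ ∑_{i<n} aᵢ xᵢ` uniformly by some `C`. A strong
`p`-Cesàro limit is a cluster point of the partial sums, so its norm is at most `C ‖a‖`.

Conversely, given a functional `f` and `n`, take `aᵢ = sign f(xᵢ)` for `i < n` and `aᵢ = 0`
afterwards: the partial sums are eventually constant, hence strongly Cesàro convergent to
`∑_{i<n} aᵢ xᵢ`, and applying `f` gives `∑_{i<n} |f(xᵢ)| ≤ ‖f‖ C`.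
-/

namespace StrongCesaro

variable {X : Type*} [NormedAddCommGroup X] {p : ℝ} {y : ℕ → X} {L : X}

theorem exists_norm_sub_le (hp : 0 < p) (h : StrongCesaro p y L) {ε : ℝ} (hε : 0 < ε) :
    ∃ n, ‖y n - L‖ ≤ ε := by
  by_contra! hfar
  have hmean : ∀ᶠ n : ℕ in atTop, ε ^ p ≤ (n : ℝ)⁻¹ * ∑ k ∈ range n, ‖y k - L‖ ^ p := by
    filter_upwards [eventually_ge_atTop 1] with n hn
    rw [le_inv_mul_iff₀ (by positivity)]
    calc (n : ℝ) * ε ^ p = ∑ _k ∈ range n, ε ^ p := by simp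
      _ ≤ ∑ k ∈ range n, ‖y k - L‖ ^ p :=
        sum_le_sum fun k _ => Real.rpow_le_rpow hε.le (hfar k).le hp.le
  exact (Real.rpow_pos_of_pos hε p).not_ge (ge_of_tendsto h hmean)

theorem norm_le (hp : 0 < p) (h : StrongCesaro p y L) {M : ℝ} (hy : ∀ n, ‖y n‖ ≤ M) :
    ‖L‖ ≤ M := by
  refine le_of_forall_pos_le_add fun ε hε => ?_
  obtain ⟨n, hn⟩ := h.exists_norm_sub_le hp hε
  calc ‖L‖ ≤ ‖y n‖ + ‖y n - L‖ := by
        simpa [norm_sub_rev] using norm_le_norm_add_norm_sub' L (y n)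
    _ ≤ M + ε := add_le_add (hy n) hn

theorem of_eventually_eq (hp : 0 < p) (h : ∀ᶠ n in atTop, y n = L) : StrongCesaro p y L := by
  obtain ⟨N, hN⟩ := eventually_atTop.1 h
  have hsum : ∀ n ≥ N, ∑ k ∈ range n, ‖y k - L‖ ^ p = ∑ k ∈ range N, ‖y k - L‖ ^ p :=
    fun n hn => eventually_constant_sum (fun k hk => by simp [hN k hk, hp.ne']) hn
  have hlim := tendsto_inv_atTop_nhds_zero_nat.mul_const (∑ k ∈ range N, ‖y k - L‖ ^ p)
  rw [zero_mul] at hlim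
  refine hlim.congr' ?_
  filter_upwards [eventually_ge_atTop N] with n hn
  rw [hsum n hn]

end StrongCesaro

theorem exists_norm_le_of_weakly_bounded {𝕜 E ι : Type*} [RCLike 𝕜] [NormedAddCommGroup E]
    [NormedSpace 𝕜 E] {y : ι → E} (h : ∀ f : StrongDual 𝕜 E, ∃ C, ∀ i, ‖f (y i)‖ ≤ C) :
    ∃ C, ∀ i, ‖y i‖ ≤ C := by
  obtain ⟨C, hC⟩ := banach_steinhaus (g := fun i => NormedSpace.inclusionInDoubleDualLi 𝕜 (y i)) h
  exact ⟨C, fun i => ((NormedSpace.inclusionInDoubleDualLi 𝕜).norm_map (y i)).symm.trans_le (hC i)⟩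

section PartialSum

variable (𝕜 : Type*) {E : Type*} [NormedField 𝕜] [NormedAddCommGroup E] [NormedSpace 𝕜 E]

noncomputable def partialSumCLM (x : ℕ → E) (n : ℕ) : (ℕ →ᵇ 𝕜) →L[𝕜] E :=
  ∑ i ∈ range n, (evalCLM 𝕜 i).smulRight (x i)

@[simp]
theorem partialSumCLM_apply (x : ℕ → E) (n : ℕ) (a : ℕ →ᵇ 𝕜) :
    partialSumCLM 𝕜 x n a = ∑ i ∈ range n, a i • x i := by
  simp [partialSumCLM]

end PartialSum

theorem exists_norm_partialSumCLM_le {𝕜 E : Type*} [RCLike 𝕜] [NormedAddCommGroup E]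
    [NormedSpace 𝕜 E] {x : ℕ → E} (hx : ∀ f : StrongDual 𝕜 E, Summable fun i => ‖f (x i)‖) :
    ∃ C, ∀ n, ‖partialSumCLM 𝕜 x n‖ ≤ C := by
  refine banach_steinhaus fun (a : ℕ →ᵇ 𝕜) => exists_norm_le_of_weakly_bounded (𝕜 := 𝕜) fun f =>
    ⟨‖a‖ * ∑' i, ‖f (x i)‖, fun n => ?_⟩
  calc ‖f (partialSumCLM 𝕜 x n a)‖ = ‖∑ i ∈ range n, a i * f (x i)‖ := by simp
    _ ≤ ∑ i ∈ range n, ‖a‖ * ‖f (x i)‖ := by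
      refine (norm_sum_le _ _).trans (sum_le_sum fun i _ => ?_)
      rw [norm_mul]
      gcongr
      exact a.norm_coe_le_norm i
    _ ≤ ‖a‖ * ∑' i, ‖f (x i)‖ := by
      rw [← mul_sum]
      gcongr
      exact (hx f).sum_le_tsum _ fun i _ => norm_nonneg _

noncomputable def truncatedSign (c : ℕ → ℝ) (n : ℕ) : ℕ →ᵇ ℝ :=
  ofNormedAddCommGroupDiscrete (fun i => if i < n then (SignType.sign (c i) : ℝ) else 0) 1
    fun i => by split_ifs <;> cases SignType.sign (c i) <;> simp

theorem norm_truncatedSign_le (c : ℕ → ℝ) (n : ℕ) : ‖truncatedSign c n‖ ≤ 1 := by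
  unfold truncatedSign
  exact norm_ofNormedAddCommGroup_le _ zero_le_one _

theorem truncatedSign_of_le (c : ℕ → ℝ) {n i : ℕ} (h : n ≤ i) : truncatedSign c n i = 0 := by
  simp [truncatedSign, h.not_gt]

theorem sum_truncatedSign_mul (c : ℕ → ℝ) (n : ℕ) :
    ∑ i ∈ range n, truncatedSign c n i * c i = ∑ i ∈ range n, |c i| :=
  sum_congr rfl fun i hi => by simp [truncatedSign, mem_range.1 hi]

theorem norm_sum_smul_le_of_strongCesaro_bound {X : Type*} [NormedAddCommGroup X]
    [NormedSpace ℝ X] {p C : ℝ} (hp : 0 < p) {x : ℕ → X}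
    (hC : ∀ (a : ℕ →ᵇ ℝ) (L : X),
      StrongCesaro p (fun n => ∑ i ∈ range n, a i • x i) L → ‖L‖ ≤ C * ‖a‖)
    (a : ℕ →ᵇ ℝ) {n : ℕ} (ha : ∀ i ≥ n, a i = 0) :
    ‖∑ i ∈ range n, a i • x i‖ ≤ C * ‖a‖ :=
  hC a _ <| StrongCesaro.of_eventually_eq hp <| eventually_atTop.2
    ⟨n, fun _ hm => eventually_constant_sum (fun i hi => by simp [ha i hi]) hm⟩

theorem statement14_general {X : Type*} [NormedAddCommGroup X] [NormedSpace ℝ X]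
    (p : ℝ) (hp : 0 < p) (x : ℕ → X) :
    (∀ f : X →L[ℝ] ℝ, Summable fun i => |f (x i)|) ↔
      ∃ C : ℝ, 0 ≤ C ∧ ∀ (a : ℕ →ᵇ ℝ) (L : X),
        StrongCesaro p (fun n => ∑ i ∈ range n, a i • x i) L → ‖L‖ ≤ C * ‖a‖ := by
  constructor
  · intro hx
    obtain ⟨C, hC⟩ := exists_norm_partialSumCLM_le (𝕜 := ℝ) (x := x) (by simpa using hx)
    refine ⟨max C 0, le_max_right _ _, fun a L hL => hL.norm_le hp fun n => ?_⟩
    rw [← partialSumCLM_apply]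
    exact (partialSumCLM ℝ x n).le_of_opNorm_le ((hC n).trans (le_max_left _ _)) a
  · rintro ⟨C, hC0, hC⟩ f
    refine summable_of_sum_range_le (c := ‖f‖ * C) (fun i => abs_nonneg _) fun n => ?_
    set a := truncatedSign (fun i => f (x i)) n
    calc ∑ i ∈ range n, |f (x i)| = f (∑ i ∈ range n, a i • x i) := by
          simp [a, sum_truncatedSign_mul]
      _ ≤ ‖f‖ * ‖∑ i ∈ range n, a i • x i‖ := (Real.le_norm_self _).trans (f.le_opNorm _)
      _ ≤ ‖f‖ * (C * ‖a‖) := by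
          gcongr
          exact norm_sum_smul_le_of_strongCesaro_bound hp hC a fun i => truncatedSign_of_le _
      _ ≤ ‖f‖ * C := by
          gcongr
          exact mul_le_of_le_one_right hC0 (norm_truncatedSign_le _ _)

theorem statement14 {X : Type*} [NormedAddCommGroup X] [NormedSpace ℝ X] [CompleteSpace X]
    (p : ℝ) (hp : 0 < p) (x : ℕ → X) :
    (∀ f : X →L[ℝ] ℝ, Summable fun i => |f (x i)|) ↔
      ∃ C : ℝ, 0 ≤ C ∧ ∀ (a : ℕ →ᵇ ℝ) (L : X),
        StrongCesaro p (fun n => ∑ i ∈ range n, a i • x i) L → ‖L‖ ≤ C * ‖a‖ :=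
  statement14_general p hp x
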